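/- The finite Rogers–Ramanujan identity: for every natural number n, ∑_{r=0}^{n} q^{r^2} / ((q)_r (q)_{n-r}) = ∑_{r=-n}^{n} (-1)^r q^{(5r^2 - r)/2} / ((q)_{n-r} (q)_{n+r}), as an identity of rational functions (or for q in a field with (q)_k ≠ 0 for all relevant k). -/

import Mathlib

/-!
Bailey's lemma for `a = 1` (both free parameters sent to infinity) maps a Bailey pair `(α, β)`
to `(q^{r²} α_r, ∑ₖ q^{k²} β_k / (q)_{n-k})`. Starting from the unit pair
`α_r = (-1)^r q^{r(r-1)/2}`, `β_n = δ_{n,0}`, one application gives `β_n = 1 / (q)_n` and a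
second one gives the finite Rogers–Ramanujan identity, since `2r² + r(r-1)/2 = (5r² - r)/2`.

After interchanging the two summations, Bailey's lemma reduces to
`∑ₛ q^{s(s+t)} [m choose s]_q / (q)_{s+t} = 1 / (q)_{m+t}`, proved by induction on `m` with
the q-Pascal rule. The unit pair is the q-binomial theorem
`∑ₖ (-1)^k q^{k(k-1)/2} [m choose k]_q x^k = ∏_{i<m} (1 - x q^i)` at `m = 2n`, `x = q^{1-n}`,
where the product vanishes.
-/

open Finset

section

variable {K : Type*} [Field K]

lemma Int.natCast_choose_two (k : ℕ) : ((k.choose 2 : ℕ) : ℤ) = k * (k - 1) / 2 := by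
  rcases k with _ | k
  · simp
  · rw [Nat.choose_two_right, Int.natCast_ediv]
    push_cast
    ring_nf

lemma natCast_choose_two_add_one_sub_mul {n k : ℕ} {r : ℤ} (hk : (k : ℤ) = n - r) :
    ((k.choose 2 : ℕ) : ℤ) + (1 - n) * k = -((n.choose 2 : ℕ) : ℤ) + r * (r - 1) / 2 := by
  rw [Int.natCast_choose_two, Int.natCast_choose_two, hk]
  have := Int.two_mul_ediv_two_of_even (Int.even_mul_pred_self r)
  have := Int.two_mul_ediv_two_of_even (Int.even_mul_pred_self (n : ℤ))
  have := Int.two_mul_ediv_two_of_even (Int.even_mul_pred_self ((n : ℤ) - r))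
  linarith

lemma sum_Icc_toNat_sub_eq_sum_range {M : Type*} [AddCommMonoid M] (f : ℕ → M) (n : ℕ) :
    ∑ r ∈ Icc (-(n : ℤ)) n, f ((n : ℤ) - r).toNat = ∑ k ∈ range (2 * n + 1), f k :=
  sum_nbij' (fun r => ((n : ℤ) - r).toNat) (fun k => (n : ℤ) - k)
    (fun r hr => by simp only [mem_Icc, mem_range] at hr ⊢; omega)
    (fun k hk => by simp only [mem_Icc, mem_range] at hk ⊢; omega)
    (fun r hr => by simp only [mem_Icc] at hr; omega)
    (fun k _ => by omega) (fun _ _ => rfl)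

lemma neg_one_zpow_sub (a b : ℤ) : (-1 : K) ^ (a - b) = (-1) ^ a * (-1) ^ b := by
  rw [zpow_sub₀ (neg_ne_zero.mpr one_ne_zero), div_eq_mul_inv, ← inv_zpow, inv_neg_one]

lemma RatFunc.X_pow_succ_ne_one {F : Type*} [Field F] (m : ℕ) :
    (RatFunc.X : RatFunc F) ^ (m + 1) ≠ 1 := by
  rw [← RatFunc.algebraMap_X, ← map_pow, ← map_one (algebraMap (Polynomial F) (RatFunc F)),
    (RatFunc.algebraMap_injective F).ne_iff]
  intro h
  simpa using congrArg Polynomial.natDegree h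

def qPoch (q : K) (r : ℕ) : K := ∏ j ∈ range r, (1 - q ^ (j + 1))

def qBinom (q : K) (m k : ℕ) : K :=
  if k ≤ m then qPoch q m / (qPoch q k * qPoch q (m - k)) else 0

/-- Bailey pairs relative to `a = 1`, with `α` indexed by `ℤ`: the classical `αₙ` (`n > 0`)
is `α n + α (-n)`. -/
def IsBaileyPair (q : K) (α : ℤ → K) (β : ℕ → K) : Prop :=
  ∀ n : ℕ, β n = ∑ r ∈ Icc (-(n : ℤ)) n,
    α r / (qPoch q ((n : ℤ) - r).toNat * qPoch q ((n : ℤ) + r).toNat)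

variable {q : K}

@[simp] lemma qPoch_zero : qPoch q 0 = 1 := prod_range_zero _

lemma qPoch_succ (r : ℕ) : qPoch q (r + 1) = qPoch q r * (1 - q ^ (r + 1)) :=
  prod_range_succ _ _

lemma one_sub_pow_succ_ne_zero (hq : ∀ m, q ^ (m + 1) ≠ 1) (m : ℕ) : 1 - q ^ (m + 1) ≠ 0 :=
  sub_ne_zero.mpr (hq m).symm

lemma qPoch_ne_zero (hq : ∀ m, q ^ (m + 1) ≠ 1) (r : ℕ) : qPoch q r ≠ 0 :=
  prod_ne_zero_iff.mpr fun j _ => one_sub_pow_succ_ne_zero hq j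

lemma qPoch_toNat_sub_mul_qPoch_toNat_add {a : ℕ} {j : ℤ} (h : j.natAbs ≤ a) :
    qPoch q ((a : ℤ) - j).toNat * qPoch q ((a : ℤ) + j).toNat =
      qPoch q (a - j.natAbs) * qPoch q (a + j.natAbs) := by
  rcases Int.natAbs_eq j with hj | hj
  · rw [show ((a : ℤ) - j).toNat = a - j.natAbs by omega,
      show ((a : ℤ) + j).toNat = a + j.natAbs by omega]
  · rw [show ((a : ℤ) - j).toNat = a + j.natAbs by omega,
      show ((a : ℤ) + j).toNat = a - j.natAbs by omega, mul_comm]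

lemma qBinom_of_le {m k : ℕ} (h : k ≤ m) :
    qBinom q m k = qPoch q m / (qPoch q k * qPoch q (m - k)) :=
  if_pos h

lemma qBinom_of_lt {m k : ℕ} (h : m < k) : qBinom q m k = 0 := if_neg h.not_ge

lemma qBinom_zero_right (hq : ∀ m, q ^ (m + 1) ≠ 1) (m : ℕ) : qBinom q m 0 = 1 := by
  rw [qBinom_of_le m.zero_le, qPoch_zero, one_mul, Nat.sub_zero, div_self (qPoch_ne_zero hq m)]

lemma qBinom_self (hq : ∀ m, q ^ (m + 1) ≠ 1) (m : ℕ) : qBinom q m m = 1 := by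
  rw [qBinom_of_le le_rfl, Nat.sub_self, qPoch_zero, mul_one, div_self (qPoch_ne_zero hq m)]

lemma qBinom_succ_succ (hq : ∀ m, q ^ (m + 1) ≠ 1) (m k : ℕ) :
    qBinom q (m + 1) (k + 1) = qBinom q m (k + 1) + q ^ (m - k) * qBinom q m k := by
  rcases lt_trichotomy k m with hlt | rfl | hgt
  · obtain ⟨d, rfl⟩ : ∃ d, m = k + d + 1 := ⟨m - k - 1, by omega⟩
    rw [qBinom_of_le (by omega), qBinom_of_le (by omega), qBinom_of_le (by omega),
      show k + d + 1 + 1 - (k + 1) = d + 1 by omega, show k + d + 1 - (k + 1) = d by omega,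
      show k + d + 1 - k = d + 1 by omega, qPoch_succ (k + d + 1), qPoch_succ d, qPoch_succ k]
    have := qPoch_ne_zero hq k
    have := qPoch_ne_zero hq d
    have := qPoch_ne_zero hq (k + d + 1)
    have := one_sub_pow_succ_ne_zero hq k
    have := one_sub_pow_succ_ne_zero hq d
    have := one_sub_pow_succ_ne_zero hq (k + d + 1)
    field_simp
    ring
  · rw [qBinom_self hq, qBinom_of_lt (by omega), qBinom_self hq, Nat.sub_self, pow_zero]
    ring
  · rw [qBinom_of_lt (by omega), qBinom_of_lt (by omega), qBinom_of_lt hgt, mul_zero, add_zero]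

lemma sum_range_mul_qBinom_succ (hq : ∀ m, q ^ (m + 1) ≠ 1) (f : ℕ → K) (m : ℕ) :
    ∑ k ∈ range (m + 2), f k * qBinom q (m + 1) k =
      ∑ k ∈ range (m + 1), f k * qBinom q m k +
        ∑ k ∈ range (m + 1), f (k + 1) * q ^ (m - k) * qBinom q m k := by
  have hshift : ∑ k ∈ range (m + 1), f k * qBinom q m k =
      ∑ k ∈ range (m + 1), f (k + 1) * qBinom q m (k + 1) + f 0 := by
    rw [← add_zero (∑ k ∈ range (m + 1), _), ← mul_zero (f (m + 1)),
      ← qBinom_of_lt m.lt_succ_self, ← sum_range_succ, sum_range_succ', qBinom_zero_right hq,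
      mul_one]
  rw [hshift, sum_range_succ', qBinom_zero_right hq, mul_one]
  simp only [qBinom_succ_succ hq, mul_add, sum_add_distrib, mul_assoc]
  exact add_right_comm _ _ _

lemma sum_qBinom_eq_prod (hq : ∀ m, q ^ (m + 1) ≠ 1) (x : K) (m : ℕ) :
    ∑ k ∈ range (m + 1), (-1) ^ k * q ^ k.choose 2 * x ^ k * qBinom q m k =
      ∏ i ∈ range m, (1 - x * q ^ i) := by
  induction m with
  | zero => simp [qBinom_self hq]
  | succ m ih =>
    have hstep : ∀ k ∈ range (m + 1),
        (-1) ^ (k + 1) * q ^ (k + 1).choose 2 * x ^ (k + 1) * q ^ (m - k) * qBinom q m k =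
          -(x * q ^ m) * ((-1) ^ k * q ^ k.choose 2 * x ^ k * qBinom q m k) := by
      intro k _
      have hexp : q ^ (k + k.choose 2) * q ^ (m - k) = q ^ k.choose 2 * q ^ m := by
        rw [← pow_add, ← pow_add]
        congr 1
        grind
      rw [Nat.choose_succ_succ', Nat.choose_one_right]
      linear_combination ((-1) ^ (k + 1) * x ^ (k + 1) * qBinom q m k) * hexp
    rw [sum_range_mul_qBinom_succ hq, sum_congr rfl hstep, ← mul_sum, ih, prod_range_succ]
    ring

lemma sum_qBinom_pow_div_qPoch (hq : ∀ m, q ^ (m + 1) ≠ 1) (m t : ℕ) :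
    ∑ s ∈ range (m + 1), q ^ (s * (s + t)) / qPoch q (s + t) * qBinom q m s =
      1 / qPoch q (m + t) := by
  induction m generalizing t with
  | zero => simp [qBinom_self hq]
  | succ m ih =>
    have hstep : ∀ s ∈ range (m + 1),
        q ^ ((s + 1) * (s + 1 + t)) / qPoch q (s + 1 + t) * q ^ (m - s) * qBinom q m s =
          q ^ (m + t + 1) * (q ^ (s * (s + (t + 1))) / qPoch q (s + (t + 1)) * qBinom q m s) := by
      intro s hs
      obtain ⟨d, rfl⟩ : ∃ d, m = s + d := ⟨m - s, by grind⟩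
      have hexp : q ^ ((s + 1) * (s + 1 + t)) * q ^ (s + d - s) =
          q ^ (s + d + t + 1) * q ^ (s * (s + (t + 1))) := by
        rw [← pow_add, ← pow_add, Nat.add_sub_cancel_left]
        ring
      rw [show s + 1 + t = s + (t + 1) by ring]
      linear_combination (qBinom q (s + d) s / qPoch q (s + (t + 1))) * hexp
    rw [sum_range_mul_qBinom_succ hq, sum_congr rfl hstep, ← mul_sum, ih, ih,
      show m + (t + 1) = m + t + 1 by ring, show m + 1 + t = m + t + 1 by ring, qPoch_succ]
    have := qPoch_ne_zero hq (m + t)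
    have := one_sub_pow_succ_ne_zero hq (m + t)
    field_simp
    ring

lemma sum_Icc_pow_sq_div_qPoch (hq : ∀ m, q ^ (m + 1) ≠ 1) {j n : ℕ} (hj : j ≤ n) :
    ∑ r ∈ Icc j n, q ^ r ^ 2 / (qPoch q (n - r) * (qPoch q (r - j) * qPoch q (r + j))) =
      q ^ j ^ 2 / (qPoch q (n - j) * qPoch q (n + j)) := by
  obtain ⟨m, rfl⟩ : ∃ m, n = j + m := ⟨n - j, by omega⟩
  have hterm : ∀ s ∈ range (m + 1),
      q ^ (j + s) ^ 2 /
          (qPoch q (j + m - (j + s)) * (qPoch q (j + s - j) * qPoch q (j + s + j))) =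
        q ^ j ^ 2 / qPoch q m * (q ^ (s * (s + 2 * j)) / qPoch q (s + 2 * j) * qBinom q m s) := by
    intro s hs
    rw [mem_range] at hs
    rw [show j + m - (j + s) = m - s by omega, show j + s - j = s by omega,
      show j + s + j = s + 2 * j by omega, qBinom_of_le (by omega),
      show (j + s) ^ 2 = j ^ 2 + s * (s + 2 * j) by ring, pow_add]
    have := qPoch_ne_zero hq m
    field_simp
  rw [← Ico_add_one_right_eq_Icc, sum_Ico_eq_sum_range, show j + m + 1 - j = m + 1 by omega,
    sum_congr rfl hterm, ← mul_sum, sum_qBinom_pow_div_qPoch hq, show j + m - j = m by omega,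
    show j + m + j = m + 2 * j by omega, div_mul_div_comm, mul_one]

lemma sum_Icc_natAbs_zpow_sq_div_qPoch (hq : ∀ m, q ^ (m + 1) ≠ 1) {n : ℕ} {j : ℤ}
    (hj : j.natAbs ≤ n) :
    ∑ r ∈ Icc j.natAbs n, q ^ (r : ℤ) ^ 2 /
        (qPoch q (n - r) * (qPoch q ((r : ℤ) - j).toNat * qPoch q ((r : ℤ) + j).toNat)) =
      q ^ j ^ 2 / (qPoch q ((n : ℤ) - j).toNat * qPoch q ((n : ℤ) + j).toNat) := by
  rw [qPoch_toNat_sub_mul_qPoch_toNat_add hj, ← Int.natAbs_sq, ← Nat.cast_pow, zpow_natCast,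
    ← sum_Icc_pow_sq_div_qPoch hq hj]
  refine sum_congr rfl fun r hr => ?_
  rw [qPoch_toNat_sub_mul_qPoch_toNat_add (mem_Icc.mp hr).1, ← Nat.cast_pow, zpow_natCast]

/-- Bailey's lemma for `a = 1`, in the limit where both free parameters tend to infinity. -/
theorem IsBaileyPair.pow_sq {α : ℤ → K} {β : ℕ → K} (hq : ∀ m, q ^ (m + 1) ≠ 1)
    (h : IsBaileyPair q α β) :
    IsBaileyPair q (fun r => q ^ r ^ 2 * α r)
      (fun n => ∑ r ∈ range (n + 1), q ^ r ^ 2 * β r / qPoch q (n - r)) := by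
  intro n
  calc ∑ r ∈ range (n + 1), q ^ r ^ 2 * β r / qPoch q (n - r)
      = ∑ r ∈ range (n + 1), ∑ j ∈ Icc (-(r : ℤ)) r, α j * (q ^ (r : ℤ) ^ 2 /
          (qPoch q (n - r) * (qPoch q ((r : ℤ) - j).toNat * qPoch q ((r : ℤ) + j).toNat))) := by
        refine sum_congr rfl fun r _ => ?_
        rw [h r, mul_sum, sum_div]
        refine sum_congr rfl fun j _ => ?_
        rw [← Nat.cast_pow, zpow_natCast]
        ring
    _ = ∑ j ∈ Icc (-(n : ℤ)) n, ∑ r ∈ Icc j.natAbs n, α j * (q ^ (r : ℤ) ^ 2 /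
          (qPoch q (n - r) * (qPoch q ((r : ℤ) - j).toNat * qPoch q ((r : ℤ) + j).toNat))) :=
        sum_comm' fun r j => by simp only [mem_range, mem_Icc]; omega
    _ = _ := by
        refine sum_congr rfl fun j hj => ?_
        rw [← mul_sum, sum_Icc_natAbs_zpow_sq_div_qPoch hq (by simp only [mem_Icc] at hj; omega)]
        ring

theorem isBaileyPair_unit (hq0 : q ≠ 0) (hq : ∀ m, q ^ (m + 1) ≠ 1) :
    IsBaileyPair q (fun r => (-1) ^ r * q ^ (r * (r - 1) / 2))
      (fun n => if n = 0 then 1 else 0) := by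
  intro n
  rcases Nat.eq_zero_or_pos n with rfl | hn
  · simp
  simp only [hn.ne', if_false]
  set x : K := q ^ (1 - (n : ℤ))
  set T : ℕ → K := fun k => (-1) ^ k * q ^ k.choose 2 * x ^ k * qBinom q (2 * n) k
  set c : K := (-1) ^ (n : ℤ) * q ^ (-((n.choose 2 : ℕ) : ℤ)) * qPoch q (2 * n)
  have hvanish : ∑ k ∈ range (2 * n + 1), T k = 0 := by
    rw [sum_qBinom_eq_prod hq]
    refine prod_eq_zero (i := n - 1) (by rw [mem_range]; omega) ?_
    rw [sub_eq_zero, ← zpow_natCast, ← zpow_add₀ hq0, Nat.cast_sub hn]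
    simp
  have hterm : ∀ r ∈ Icc (-(n : ℤ)) n, T ((n : ℤ) - r).toNat =
      c * ((-1) ^ r * q ^ (r * (r - 1) / 2) /
        (qPoch q ((n : ℤ) - r).toNat * qPoch q ((n : ℤ) + r).toNat)) := by
    intro r hr
    rw [mem_Icc] at hr
    obtain ⟨k, hk⟩ : ∃ k : ℕ, ((n : ℤ) - r).toNat = k := ⟨_, rfl⟩
    have hkr : (k : ℤ) = n - r := by omega
    have hsign : (-1 : K) ^ k = (-1) ^ (n : ℤ) * (-1) ^ r := by
      rw [← zpow_natCast, hkr, neg_one_zpow_sub]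
    have hpow :
        q ^ k.choose 2 * x ^ k = q ^ (-((n.choose 2 : ℕ) : ℤ)) * q ^ (r * (r - 1) / 2) := by
      rw [← zpow_natCast, ← zpow_natCast, ← zpow_mul, ← zpow_add₀ hq0, ← zpow_add₀ hq0,
        natCast_choose_two_add_one_sub_mul hkr]
    simp only [T, c, hk]
    rw [qBinom_of_le (by omega), show 2 * n - k = ((n : ℤ) + r).toNat by omega, hsign]
    linear_combination ((-1) ^ (n : ℤ) * (-1) ^ r * qPoch q (2 * n) /
      (qPoch q k * qPoch q ((n : ℤ) + r).toNat)) * hpow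
  have hc : c ≠ 0 := mul_ne_zero (mul_ne_zero (zpow_ne_zero _ (neg_ne_zero.mpr one_ne_zero))
    (zpow_ne_zero _ hq0)) (qPoch_ne_zero hq _)
  rw [← sum_Icc_toNat_sub_eq_sum_range, sum_congr rfl hterm, ← mul_sum] at hvanish
  exact ((mul_eq_zero.mp hvanish).resolve_left hc).symm

end

theorem finite_rogers_ramanujan (n : ℕ) :
    let q : RatFunc ℚ := RatFunc.X
    let P : ℕ → RatFunc ℚ := fun r => ∏ j ∈ Finset.range r, (1 - q^(j+1))
    ∑ r ∈ Finset.range (n+1), q^(r^2) / (P r * P (n - r)) =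
      ∑ r ∈ Finset.Icc (-(n:ℤ)) (n:ℤ),
        (-1 : RatFunc ℚ)^r * q^((5*r^2 - r)/2) /
          (P ((n:ℤ) - r).toNat * P ((n:ℤ) + r).toNat) := by
  intro q P
  change ∑ r ∈ range (n + 1), q ^ r ^ 2 / (qPoch q r * qPoch q (n - r)) =
    ∑ r ∈ Icc (-(n : ℤ)) n, (-1) ^ r * q ^ ((5 * r ^ 2 - r) / 2) /
      (qPoch q ((n : ℤ) - r).toNat * qPoch q ((n : ℤ) + r).toNat)
  have hq0 : q ≠ 0 := RatFunc.X_ne_zero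
  have hq : ∀ m, q ^ (m + 1) ≠ 1 := RatFunc.X_pow_succ_ne_one
  have hβ : ∀ r : ℕ,
      ∑ s ∈ range (r + 1), q ^ s ^ 2 * (if s = 0 then 1 else 0) / qPoch q (r - s) =
        1 / qPoch q r := fun r => by
    rw [sum_eq_single_of_mem 0 (by simp) fun s _ hs => by simp [hs]]
    simp
  have hα : ∀ r : ℤ, q ^ r ^ 2 * (q ^ r ^ 2 * ((-1) ^ r * q ^ (r * (r - 1) / 2))) =
      (-1) ^ r * q ^ ((5 * r ^ 2 - r) / 2) := by
    intro r
    rw [show (5 * r ^ 2 - r) / 2 = r ^ 2 + (r ^ 2 + r * (r - 1) / 2) by grind, zpow_add₀ hq0,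
      zpow_add₀ hq0]
    ring
  have hpair := ((isBaileyPair_unit hq0 hq).pow_sq hq).pow_sq hq n
  simp only [hβ, hα] at hpair
  rw [← hpair]
  refine sum_congr rfl fun r _ => ?_
  rw [mul_one_div, div_div]
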